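/- For all integers T ≥ 1, 1 ≤ N ≤ T, m ≥ 1, and reals D > 0, A ≥ 0 with A ≥ D·m·(T - N + 1)/N: in the m-builder censorship game where in each round Daria offers total payment B_i and Alice offers per-builder payment c_i, Alice wins round i with certainty whenever B_i ≤ c_i (paying m·c_i) while Daria pays B_i > c_i whenever she wins round i, Alice has a strategy (set c_i = D/N every round) guaranteeing she wins T - N + 1 rounds before Daria wins N rounds. -/
import Mathlib


/-- `GDariaWins m t n d a` : in the `m`-builder censorship game with `t` rounds
remaining, Daria needing `n` round-wins, Daria's budget `d` and Alice's budget `a`,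
Daria has a winning strategy. In each round Daria offers a total payment
`B ∈ [0, d]`, then Alice offers a per-builder payment `c ≥ 0` with `m·c ≤ a`;
if `B ≤ c` Alice wins the round with certainty, paying `m·c`; if `c < B` the round
may go to Daria (the worst case for Alice), who then pays `B`. Daria wins the game
upon `n` round-wins (i.e. when she wins a round with `n = 1`). -/
def GDariaWins (m : ℕ) : ℕ → ℕ → ℝ → ℝ → Prop
  | 0, _, _, _ => False
  | t + 1, n, d, a => ∃ B : ℝ, 0 ≤ B ∧ B ≤ d ∧ ∀ c : ℝ, 0 ≤ c → (m : ℝ) * c ≤ a →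
      (B ≤ c → GDariaWins m t n d (a - m * c)) ∧
      (c < B → (n = 1 ∨ GDariaWins m t (n - 1) (d - B) a))

/-- If Daria needs more round wins than rounds remaining, she cannot win. -/
lemma aux_tooMany (m : ℕ) : ∀ t n : ℕ, ∀ d a : ℝ, t < n → 0 ≤ a →
    ¬ GDariaWins m t n d a := by
  intro t
  induction t with
  | zero => intro n d a _ _ h; exact h
  | succ t ih =>
    intro n d a hn ha h
    obtain ⟨B, hB0, hBd, hB⟩ := h
    obtain ⟨h1, h2⟩ := hB 0 le_rfl (by simpa using ha)
    by_cases hc : B ≤ 0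
    · have := h1 hc
      simp only [mul_zero, sub_zero] at this
      exact ih n d a (by omega) ha this
    · rcases h2 (lt_of_not_ge hc) with h | h
      · omega
      · exact ih (n - 1) (d - B) a (by omega) ha h

lemma aux_main (m : ℕ) (c₀ : ℝ) (hc : 0 < c₀) : ∀ t n : ℕ, ∀ d a : ℝ,
    1 ≤ n → n ≤ t → d ≤ n * c₀ → (m : ℝ) * c₀ * ((t : ℝ) - n + 1) ≤ a →
    ¬ GDariaWins m t n d a := by
  intro t
  induction t with
  | zero => intro n d a hn hnt _ _ h; exact h
  | succ t ih =>
    intro n d a hn hnt hd ha h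
    obtain ⟨B, hB0, hBd, hB⟩ := h
    have hX : (1 : ℝ) ≤ (t + 1 : ℕ) - (n : ℝ) + 1 := by
      have : (n : ℝ) ≤ (t + 1 : ℕ) := by exact_mod_cast hnt
      linarith
    have hmc : (0 : ℝ) ≤ (m : ℝ) * c₀ :=
      mul_nonneg (Nat.cast_nonneg m) hc.le
    have hma : (m : ℝ) * c₀ ≤ a := by nlinarith
    obtain ⟨hAl, hDa⟩ := hB c₀ hc.le hma
    by_cases hBc : B ≤ c₀
    · have hrec := hAl hBc
      by_cases hnt' : n ≤ t
      · refine ih n d (a - m * c₀) hn hnt' hd ?_ hrec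
        push_cast at ha ⊢
        linarith
      · exact aux_tooMany m t n d (a - m * c₀) (by omega) (by linarith) hrec
    · push_neg at hBc
      have hn1 : n ≠ 1 := by
        intro h1
        subst h1
        push_cast at hd
        linarith
      rcases hDa hBc with h | h
      · exact hn1 h
      · have hn2 : 2 ≤ n := by omega
        refine ih (n - 1) (d - B) a (by omega) (by omega) ?_ ?_ h
        · have : ((n - 1 : ℕ) : ℝ) = (n : ℝ) - 1 := by
            push_cast [Nat.cast_sub (by omega : 1 ≤ n)]; ring
          rw [this]
          nlinarith
        · have : ((n - 1 : ℕ) : ℝ) = (n : ℝ) - 1 := by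
            push_cast [Nat.cast_sub (by omega : 1 ≤ n)]; ring
          rw [this]
          push_cast at ha ⊢
          linarith

theorem stmt_15 (T N m : ℕ) (hN : 1 ≤ N) (hNT : N ≤ T) (hm : 1 ≤ m)
    (D A : ℝ) (hD : 0 < D) (hA0 : 0 ≤ A)
    (hA : D * m * ((T : ℝ) - N + 1) / N ≤ A) :
    ¬ GDariaWins m T N D A := by
  have hN0 : (0 : ℝ) < (N : ℝ) := by exact_mod_cast hN
  have hc : 0 < D / N := div_pos hD hN0
  refine aux_main m (D / N) hc T N D A hN hNT ?_ ?_
  · rw [mul_div_assoc']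
    rw [mul_comm]
    rw [mul_div_assoc]
    rw [div_self hN0.ne']
    simp
  · calc (m : ℝ) * (D / N) * ((T : ℝ) - N + 1)
        = D * m * ((T : ℝ) - N + 1) / N := by ring
      _ ≤ A := hA
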